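/- arXiv:0910.5317 — 4 statements merged into one kernel-verified Lean document; each statement's English description precedes it below -/
import Mathlib

section
/- Assume (F2) and that c ∈ ℝ. Then there exists a set Ā ∈ F which is optimal for J at c, i.e. sup_{x ∈ Ā} J(x) = c. -/
open Filter Topology

/-- Kuratowski limit superior of a sequence of subsets of a metric space:
the set of points `x` for which there are `n_k → ∞` and `x_{n_k} ∈ A_{n_k}`
with `x_{n_k} → x`. -/
def SeqLimsup {X : Type*} [MetricSpace X] (A : ℕ → Set X) : Set X :=
  {x | ∃ φ : ℕ → ℕ, StrictMono φ ∧
    ∃ y : ℕ → X, (∀ n, y n ∈ A (φ n)) ∧ Tendsto y atTop (𝓝 x)}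

/-! Choose `A n ∈ F` with `sup_{A n} J < u n`, where `u n ↓ c` stays below `c'`. Then every `A n`
lies in the sublevel set `M^{c'}`, so `Ā = limsup A n ∈ F` by (F2) and `sup_Ā J ≥ c` by definition
of `c`. Conversely a point of `Ā` is a limit of points `y k ∈ A (φ k)` with `J (y k) < u (φ k) → c`,
so `J ≤ c` on `Ā` by lower semicontinuity. -/

section

variable {α β γ : Type*} [TopologicalSpace α] [LinearOrder γ] [TopologicalSpace γ]
  [OrderTopology γ] [DenselyOrdered γ]

theorem LowerSemicontinuousAt.le_of_tendsto_of_eventually_le {f : α → γ} {x : α}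
    (hf : LowerSemicontinuousAt f x) {l : Filter β} [l.NeBot] {y : β → α} {u : β → γ} {L : γ}
    (hy : Tendsto y l (𝓝 x)) (hu : Tendsto u l (𝓝 L)) (hfu : ∀ᶠ k in l, f (y k) ≤ u k) :
    f x ≤ L := by
  by_contra! hL
  obtain ⟨r, hLr, hrf⟩ := exists_between hL
  have hfy : ∀ᶠ k in l, r < f (y k) := hy.eventually (hf r hrf)
  have hur : ∀ᶠ k in l, u k < r := hu.eventually (gt_mem_nhds hLr)
  obtain ⟨k, hk₁, hk₂, hk₃⟩ := (hfy.and (hfu.and hur)).exists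
  exact (hk₁.trans_le hk₂).not_gt hk₃

theorem le_of_mem_seqLimsup {X : Type*} [MetricSpace X] {J : X → γ} (hJ : LowerSemicontinuous J)
    {A : ℕ → Set X} {u : ℕ → γ} {L : γ} (hA : ∀ n, ∀ x ∈ A n, J x ≤ u n)
    (hu : Tendsto u atTop (𝓝 L)) {x : X} (hx : x ∈ SeqLimsup A) : J x ≤ L := by
  obtain ⟨φ, hφ, y, hyA, hyx⟩ := hx
  exact (hJ.lowerSemicontinuousAt x).le_of_tendsto_of_eventually_le hyx
    (hu.comp hφ.tendsto_atTop) (Eventually.of_forall fun k => hA _ _ (hyA k))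

end

/-- Assume (F2) and that the minimax level `c` is real. Then there exists a set
`Ā ∈ F` which is optimal for `J` at `c`, i.e. `sup_{x ∈ Ā} J(x) = c`. -/
theorem optimal_set_exists {X : Type*} [MetricSpace X]
    (F : Set (Set X)) (J : X → EReal) (hJ : LowerSemicontinuous J)
    (c : ℝ) (hc : (⨅ A ∈ F, ⨆ x ∈ A, J x) = (c : EReal))
    (hF2 : ∃ c' : EReal, (c : EReal) < c' ∧
      ∀ A : ℕ → Set X, (∀ n, A n ∈ F) → (∀ n, ∀ x ∈ A n, J x ≤ c') →
        SeqLimsup A ∈ F) :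
    ∃ A ∈ F, (⨆ x ∈ A, J x) = (c : EReal) := by
  obtain ⟨c', hcc', hF2⟩ := hF2
  obtain ⟨u, -, hu_mem, hu_lim⟩ := exists_seq_strictAnti_tendsto' hcc'
  have hex : ∀ n, ∃ A ∈ F, (⨆ x ∈ A, J x) < u n := fun n => by
    simpa only [iInf_lt_iff, exists_prop] using hc.trans_lt (hu_mem n).1
  choose A hAF hAu using hex
  have hAJ : ∀ n, ∀ x ∈ A n, J x ≤ u n := fun n x hx =>
    (le_iSup₂ (f := fun x _ => J x) x hx).trans (hAu n).le
  have hlim : SeqLimsup A ∈ F :=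
    hF2 A hAF fun n x hx => (hAJ n x hx).trans (hu_mem n).2.le
  refine ⟨SeqLimsup A, hlim, le_antisymm ?_ (hc ▸ iInf₂_le _ hlim)⟩
  exact iSup₂_le fun x hx => le_of_mem_seqLimsup hJ hAJ hu_lim hx
end

section
/- Assume (J) and (F2'), and suppose c_β ∈ ℝ for every 0 < β ≤ +∞. Then c_β → c_∞ as β → +∞. -/
/-!
If every `c_β` stayed below a real `t < c_∞`, pick `A n ∈ F` with `J (n + 1) ≤ t` on `A n`. By (J)
all of them lie in the sublevel set `{J 1 ≤ c_∞ + 1}`, so (F2') puts their Kuratowski limsup `B`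
in `F`. For each `β` the sets `A n` eventually lie in `{J β ≤ t}`, which is closed by lower
semicontinuity, hence so does `B`. Thus `J_∞ ≤ t` on `B`, i.e. `c_∞ ≤ t`, a contradiction; since
`β ↦ c_β` is nondecreasing and bounded by `c_∞`, it converges to `c_∞`.
-/

open Filter Topology

section MinimaxLevel

variable {X α : Type*}

def minimaxLevel [CompleteLattice α] (F : Set (Set X)) (f : X → α) : α :=
  ⨅ A ∈ F, ⨆ x ∈ A, f x

theorem minimaxLevel_mono [CompleteLattice α] (F : Set (Set X)) {f g : X → α} (hfg : f ≤ g) :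
    minimaxLevel F f ≤ minimaxLevel F g :=
  iInf₂_mono fun _ _ => iSup₂_mono fun x _ => hfg x

theorem minimaxLevel_le_of_mem [CompleteLattice α] {F : Set (Set X)} {f : X → α} {A : Set X}
    {t : α} (hA : A ∈ F) (hfA : ∀ x ∈ A, f x ≤ t) : minimaxLevel F f ≤ t :=
  (iInf₂_le A hA).trans (iSup₂_le hfA)

theorem exists_mem_forall_le_of_minimaxLevel_lt [CompleteLinearOrder α] {F : Set (Set X)}
    {f : X → α} {t : α} (h : minimaxLevel F f < t) : ∃ A ∈ F, ∀ x ∈ A, f x ≤ t := by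
  obtain ⟨A, hA⟩ := iInf_lt_iff.1 h
  obtain ⟨hAF, hlt⟩ := iInf_lt_iff.1 hA
  exact ⟨A, hAF, fun x hx => (le_iSup₂ (f := fun x (_ : x ∈ A) => f x) x hx).trans hlt.le⟩

end MinimaxLevel

theorem seqLimsup_subset_of_isClosed {X : Type*} [MetricSpace X] {A : ℕ → Set X} {C : Set X}
    (hC : IsClosed C) (hAC : ∀ᶠ n in atTop, A n ⊆ C) : SeqLimsup A ⊆ C := by
  rintro x ⟨φ, hφ, y, hyA, hyx⟩
  exact hC.mem_of_tendsto hyx ((hφ.tendsto_atTop.eventually hAC).mono fun n hn => hn (hyA n))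

theorem minimaxLevel_iSup_le_of_forall_lt {X : Type*} [MetricSpace X] {F : Set (Set X)}
    {J : ℝ → X → EReal} (hlsc : ∀ β : ℝ, 0 < β → LowerSemicontinuous (J β))
    (hmono : ∀ β₁ β₂ : ℝ, 0 < β₁ → β₁ ≤ β₂ → ∀ x, J β₁ x ≤ J β₂ x) {t : EReal}
    (hF : ∀ A : ℕ → Set X, (∀ n, A n ∈ F) → (∀ n, ∀ x ∈ A n, J 1 x ≤ t) → SeqLimsup A ∈ F)
    (ht : ∀ n : ℕ, minimaxLevel F (J (n + 1)) < t) :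
    minimaxLevel F (fun x => ⨆ β : ℝ, ⨆ _ : 0 < β, J β x) ≤ t := by
  choose A hAF hAt using fun n => exists_mem_forall_le_of_minimaxLevel_lt (ht n)
  have hB : SeqLimsup A ∈ F := hF A hAF fun n x hx =>
    (hmono 1 (n + 1) one_pos (by simp) x).trans (hAt n x hx)
  refine minimaxLevel_le_of_mem hB fun x hx => iSup₂_le fun β hβ => ?_
  have hA_sub : ∀ᶠ n : ℕ in atTop, A n ⊆ J β ⁻¹' Set.Iic t := by
    filter_upwards [(tendsto_natCast_atTop_atTop (R := ℝ)).eventually_ge_atTop β] with n hn y hy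
    exact (hmono β (n + 1) hβ (by linarith) y).trans (hAt n y hy)
  exact seqLimsup_subset_of_isClosed ((hlsc β hβ).isClosed_preimage t) hA_sub hx

theorem minimax_levels_converge_general {X : Type*} [MetricSpace X]
    (F : Set (Set X)) (J : ℝ → X → EReal)
    -- each J_β, β > 0, is lower semicontinuous
    (hlsc : ∀ β : ℝ, 0 < β → LowerSemicontinuous (J β))
    -- assumption (J): monotonicity in β on (0, +∞)
    (hmono : ∀ β₁ β₂ : ℝ, 0 < β₁ → β₁ ≤ β₂ → ∀ x, J β₁ x ≤ J β₂ x)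
    -- the limit functional J_∞
    (Jinf : X → EReal) (hJinf : ∀ x, Jinf x = ⨆ β : ℝ, ⨆ _ : 0 < β, J β x)
    -- the minimax levels c_β, 0 < β < +∞
    (cβ : ℝ → EReal) (hcβ : ∀ β : ℝ, cβ β = ⨅ A ∈ F, ⨆ x ∈ A, J β x)
    -- the minimax level c_∞ is real
    (cinf : ℝ) (hcinf : (⨅ A ∈ F, ⨆ x ∈ A, Jinf x) = (cinf : EReal))
    -- assumption (F2')
    (hF2' : ∀ A : ℕ → Set X, (∀ n, A n ∈ F) →
      (∃ β : ℝ, 0 < β ∧ ∀ n, ∀ x ∈ A n, J β x ≤ (cinf : EReal) + 1) →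
      SeqLimsup A ∈ F) :
    Tendsto cβ atTop (𝓝 (cinf : EReal)) := by
  change ∀ β, cβ β = minimaxLevel F (J β) at hcβ
  change minimaxLevel F Jinf = cinf at hcinf
  rw [funext hJinf] at hcinf
  have hcmono : ∀ β₁ β₂, 0 < β₁ → β₁ ≤ β₂ → cβ β₁ ≤ cβ β₂ := fun β₁ β₂ h₁ h₁₂ => by
    simpa only [hcβ] using minimaxLevel_mono F (hmono β₁ β₂ h₁ h₁₂)
  have hcle : ∀ β, 0 < β → cβ β ≤ cinf := fun β hβ => by
    simpa only [hcβ, hcinf] using minimaxLevel_mono F fun x =>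
      le_iSup₂ (f := fun β (_ : 0 < β) => J β x) β hβ
  refine tendsto_order.2 ⟨fun a ha => ?_, fun a ha => ?_⟩
  · obtain ⟨t, hat, htc⟩ := EReal.lt_iff_exists_real_btwn.1 ha
    obtain ⟨n, hn⟩ : ∃ n : ℕ, (t : EReal) ≤ cβ (n + 1) := by
      by_contra! h
      have hF : ∀ A : ℕ → Set X, (∀ n, A n ∈ F) → (∀ n, ∀ x ∈ A n, J 1 x ≤ t) →
          SeqLimsup A ∈ F := fun A hAF hAt => hF2' A hAF ⟨1, one_pos, fun n x hx =>
        (hAt n x hx).trans (htc.le.trans (mod_cast (lt_add_one cinf).le))⟩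
      have := minimaxLevel_iSup_le_of_forall_lt hlsc hmono hF fun n => hcβ (n + 1) ▸ h n
      exact (hcinf ▸ this).not_gt htc
    filter_upwards [eventually_ge_atTop ((n : ℝ) + 1)] with β hβ
    exact hat.trans_le (hn.trans (hcmono _ _ (by positivity) hβ))
  · filter_upwards [eventually_gt_atTop 0] with β hβ
    exact (hcle β hβ).trans_lt ha

/-- Assume (J) and (F2'), and suppose the minimax levels `c_β` are real for every
`0 < β ≤ +∞`. Then `c_β → c_∞` as `β → +∞`. -/
theorem minimax_levels_converge {X : Type*} [MetricSpace X]
    (F : Set (Set X)) (J : ℝ → X → EReal)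
    -- each J_β, β > 0, is lower semicontinuous
    (hlsc : ∀ β : ℝ, 0 < β → LowerSemicontinuous (J β))
    -- assumption (J): monotonicity in β on (0, +∞)
    (hmono : ∀ β₁ β₂ : ℝ, 0 < β₁ → β₁ ≤ β₂ → ∀ x, J β₁ x ≤ J β₂ x)
    -- the limit functional J_∞
    (Jinf : X → EReal) (hJinf : ∀ x, Jinf x = ⨆ β : ℝ, ⨆ _ : 0 < β, J β x)
    -- the minimax levels c_β, 0 < β < +∞
    (cβ : ℝ → EReal) (hcβ : ∀ β : ℝ, cβ β = ⨅ A ∈ F, ⨆ x ∈ A, J β x)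
    -- the minimax level c_∞ is real
    (cinf : ℝ) (hcinf : (⨅ A ∈ F, ⨆ x ∈ A, Jinf x) = (cinf : EReal))
    -- the minimax levels c_β are real
    (hcreal : ∀ β : ℝ, 0 < β → ∃ r : ℝ, cβ β = (r : EReal))
    -- assumption (F2')
    (hF2' : ∀ A : ℕ → Set X, (∀ n, A n ∈ F) →
      (∃ β : ℝ, 0 < β ∧ ∀ n, ∀ x ∈ A n, J β x ≤ (cinf : EReal) + 1) →
      SeqLimsup A ∈ F) :
    Tendsto cβ atTop (𝓝 (cinf : EReal)) :=
  minimax_levels_converge_general F J hlsc hmono Jinf hJinf cβ hcβ cinf hcinf hF2'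
end

section
/- Assume (J), (F1) and (F2'), suppose c_β ∈ ℝ for every 0 < β ≤ +∞, let the maps η_β satisfy (η1)_β and (η2)_β with (J_β, η_β) satisfying (PS)_{c_β}, and assume in addition (UPS). Then C_* ∩ K_∞ is nonempty; more precisely, for every sequence β_n → +∞ and every sequence (A_n) ⊂ F with A_n optimal for J_{β_n} at c_{β_n}, there exists x̄ ∈ C_* ∩ K_∞ ∩ limsup_n A_n. -/
open Filter Topology

private lemma ereal_le_dense {a c : EReal} (h : ∀ y, y < a → y ≤ c) : a ≤ c := by
  by_contra hc
  push_neg at hc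
  obtain ⟨y, hy1, hy2⟩ := exists_between hc
  exact absurd (h y hy2) (not_le.mpr hy1)

private lemma ereal_le_coe_of_forall {y : EReal} {c : ℝ}
    (h : ∀ δ : ℝ, 0 < δ → y < ((c + δ : ℝ) : EReal)) : y ≤ (c : EReal) := by
  by_contra hc
  push_neg at hc
  obtain ⟨t, ht1, ht2⟩ := EReal.lt_iff_exists_real_btwn.mp hc
  have htc : c < t := EReal.coe_lt_coe_iff.mp ht1
  have h2 := h (t - c) (by linarith)
  rw [show c + (t - c) = t by ring] at h2
  exact lt_irrefl _ (h2.trans ht2)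

private lemma ereal_squeeze (c : ℝ) (f : ℕ → EReal)
    (hub : ∀ δ : ℝ, 0 < δ → ∀ᶠ n in atTop, f n ≤ ((c + δ : ℝ) : EReal))
    (hlb : ∀ δ : ℝ, 0 < δ → ∀ᶠ n in atTop, ((c - δ : ℝ) : EReal) ≤ f n) :
    Tendsto f atTop (𝓝 ((c : ℝ) : EReal)) := by
  refine tendsto_order.mpr ⟨fun a ha => ?_, fun a ha => ?_⟩
  · obtain ⟨t, ht1, ht2⟩ := EReal.lt_iff_exists_real_btwn.mp ha
    have htc : t < c := EReal.coe_lt_coe_iff.mp ht2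
    filter_upwards [hlb (c - t) (by linarith)] with n hn
    rw [show c - (c - t) = t by ring] at hn
    exact ht1.trans_le hn
  · obtain ⟨t, ht1, ht2⟩ := EReal.lt_iff_exists_real_btwn.mp ha
    have htc : c < t := EReal.coe_lt_coe_iff.mp ht1
    filter_upwards [hub (t - c) (by linarith)] with n hn
    rw [show c + (t - c) = t by ring] at hn
    exact hn.trans_lt ht2

private lemma eps_pos (n : ℕ) : (0:ℝ) < 1 / (n + 1) := by positivity

private lemma eps_le_one (n : ℕ) : (1:ℝ) / (n + 1) ≤ 1 := by
  have h : (0:ℝ) ≤ n := Nat.cast_nonneg n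
  rw [div_le_one (by linarith)]; linarith

private lemma eps_small : ∀ δ : ℝ, 0 < δ → ∀ᶠ n : ℕ in atTop, (1:ℝ) / (n + 1) < δ :=
  fun _ hδ => tendsto_one_div_add_atTop_nhds_zero_nat.eventually_lt_const hδ

private lemma master {X : Type*} [MetricSpace X]
    (F : Set (Set X)) (J : ℝ → X → EReal)
    (hlsc : ∀ β : ℝ, 0 < β → LowerSemicontinuous (J β))
    (hmono : ∀ β₁ β₂ : ℝ, 0 < β₁ → β₁ ≤ β₂ → ∀ x, J β₁ x ≤ J β₂ x)
    (Jinf : X → EReal) (hJinf : ∀ x, Jinf x = ⨆ β : ℝ, ⨆ _ : 0 < β, J β x)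
    (cβ : ℝ → EReal)
    (cinf : ℝ) (hcinf : (⨅ A ∈ F, ⨆ x ∈ A, Jinf x) = (cinf : EReal))
    (hF1 : ∀ A ∈ F, IsClosed A)
    (hF2' : ∀ A : ℕ → Set X, (∀ n, A n ∈ F) →
      (∃ β : ℝ, 0 < β ∧ ∀ n, ∀ x ∈ A n, J β x ≤ (cinf : EReal) + 1) →
      SeqLimsup A ∈ F)
    (η : ℝ → X → X)
    (hη1 : ∀ β : ℝ, 0 < β → ∀ A ∈ F, (∀ x ∈ A, J β x ≤ (cinf : EReal) + 1) →
      (η β) '' A ∈ F)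
    (hη2 : ∀ β : ℝ, 0 < β → ∀ x, J β x ≤ (cinf : EReal) + 1 →
      J β (η β x) ≤ J β x)
    (ηinf : X → X)
    (hη1inf : ∀ A ∈ F, (∀ x ∈ A, Jinf x ≤ (cinf : EReal) + 1) → ηinf '' A ∈ F)
    (hη2inf : ∀ x, Jinf x ≤ (cinf : EReal) + 1 → Jinf (ηinf x) ≤ Jinf x)
    (Kinf : Set X)
    (hKinfdef : Kinf = {x | Jinf x = (cinf : EReal) ∧ Jinf (ηinf x) = (cinf : EReal)})
    (hPSinf : ∀ u : ℕ → X,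
      Tendsto (fun n => Jinf (u n)) atTop (𝓝 (cinf : EReal)) →
      Tendsto (fun n => Jinf (ηinf (u n))) atTop (𝓝 (cinf : EReal)) →
      ∃ φ : ℕ → ℕ, StrictMono φ ∧ ∃ y ∈ Kinf, Tendsto (u ∘ φ) atTop (𝓝 y))
    (hUPS : ∀ u : ℕ → X, ∀ b : ℕ → ℝ, (∀ n, 0 < b n) → Tendsto b atTop atTop →
      Tendsto (fun n => J (b n) (u n)) atTop (𝓝 (cinf : EReal)) →
      Tendsto (fun n => J (b n) (η (b n) (u n))) atTop (𝓝 (cinf : EReal)) →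
      ∃ φ : ℕ → ℕ, StrictMono φ ∧ ∃ y : X,
        Tendsto (u ∘ φ) atTop (𝓝 y) ∧
        Tendsto (fun n => η (b (φ n)) (u (φ n))) atTop (𝓝 y))
    (Cstar : Set X)
    (hCstar : Cstar = {x | ∃ u : ℕ → X, ∃ b : ℕ → ℝ,
      (∀ n, 0 < b n) ∧ Tendsto b atTop atTop ∧ Tendsto u atTop (𝓝 x) ∧
      Tendsto (fun n => J (b n) (u n)) atTop (𝓝 (cinf : EReal)) ∧
      Tendsto (fun n => J (b n) (η (b n) (u n))) atTop (𝓝 (cinf : EReal))})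
    (hcle : ∀ β : ℝ, 0 < β → cβ β ≤ (cinf : EReal))
    (b : ℕ → ℝ) (hbpos : ∀ n, 0 < b n) (hb : Tendsto b atTop atTop)
    (A : ℕ → Set X) (hA : ∀ n, A n ∈ F)
    (hAopt : ∀ n, ∀ x ∈ A n, J (b n) x ≤ cβ (b n) + (((1 : ℝ) / (n + 1) : ℝ) : EReal)) :
    ∃ y, y ∈ Cstar ∩ Kinf ∩ SeqLimsup A := by
  classical
  -- coercion facts
  have hcoe1 : ∀ n : ℕ, ((cinf + 1 / (n + 1) : ℝ) : EReal) ≤ (cinf : EReal) + 1 := by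
    intro n
    rw [← EReal.coe_one, ← EReal.coe_add]
    exact EReal.coe_le_coe_iff.mpr (by linarith [eps_le_one n])
  have hcc1 : (cinf : EReal) ≤ (cinf : EReal) + 1 := by
    rw [← EReal.coe_one, ← EReal.coe_add]
    exact EReal.coe_le_coe_iff.mpr (by linarith)
  -- refined upper bound on A n
  have hub : ∀ n, ∀ x ∈ A n, J (b n) x ≤ ((cinf + 1 / (n + 1) : ℝ) : EReal) := by
    intro n x hx
    refine (hAopt n x hx).trans ?_
    rw [EReal.coe_add]
    exact add_le_add (hcle (b n) (hbpos n)) le_rfl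
  have hbd : ∀ n, ∀ x ∈ A n, J (b n) x ≤ (cinf : EReal) + 1 :=
    fun n x hx => (hub n x hx).trans (hcoe1 n)
  -- the images B n
  set B : ℕ → Set X := fun n => η (b n) '' A n with hBdef
  have hBF : ∀ n, B n ∈ F := fun n => hη1 (b n) (hbpos n) (A n) (hA n) (hbd n)
  have hBub : ∀ n, ∀ w ∈ B n, J (b n) w ≤ ((cinf + 1 / (n + 1) : ℝ) : EReal) := by
    intro n w hw
    obtain ⟨x, hx, rfl⟩ := hw
    exact (hη2 (b n) (hbpos n) x (hbd n x hx)).trans (hub n x hx)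
  -- a uniform positive lower bound for b
  obtain ⟨β₀, hβ₀pos, hβ₀le⟩ : ∃ β₀ : ℝ, 0 < β₀ ∧ ∀ n, β₀ ≤ b n := by
    obtain ⟨N, hN⟩ := eventually_atTop.mp (hb.eventually_ge_atTop 1)
    have hsne : (insert (1:ℝ) ((Finset.range N).image b)).Nonempty :=
      ⟨1, Finset.mem_insert_self _ _⟩
    refine ⟨(insert (1:ℝ) ((Finset.range N).image b)).min' hsne, ?_, ?_⟩
    · rcases Finset.mem_insert.mp (Finset.min'_mem _ hsne) with h | h
      · rw [h]; norm_num
      · obtain ⟨i, -, hi⟩ := Finset.mem_image.mp h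
        rw [← hi]; exact hbpos i
    · intro n
      rcases lt_or_ge n N with h | h
      · exact Finset.min'_le _ _
          (Finset.mem_insert_of_mem (Finset.mem_image.mpr ⟨n, Finset.mem_range.mpr h, rfl⟩))
      · exact (Finset.min'_le _ _ (Finset.mem_insert_self 1 _)).trans (hN n h)
  -- the Kuratowski limsup of B
  have hBsF : SeqLimsup B ∈ F := by
    refine hF2' B hBF ⟨β₀, hβ₀pos, fun n w hw => ?_⟩
    exact (hmono β₀ (b n) hβ₀pos (hβ₀le n) w).trans ((hBub n w hw).trans (hcoe1 n))
  set Bs := SeqLimsup B with hBs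
  -- J_∞ ≤ cinf on Bs
  have hBsub : ∀ z ∈ Bs, Jinf z ≤ (cinf : EReal) := by
    intro z hz
    obtain ⟨φ, hφ, w, hwB, hwz⟩ := hz
    rw [hJinf]
    refine iSup₂_le fun β hβ => ?_
    refine ereal_le_dense fun y hy => ereal_le_coe_of_forall fun δ hδ => ?_
    have h1 : ∀ᶠ k in atTop, y < J β (w k) := hwz.eventually ((hlsc β hβ z) y hy)
    have h2 : ∀ᶠ k in atTop, β ≤ b (φ k) :=
      (hb.comp hφ.tendsto_atTop).eventually_ge_atTop β
    have h3 : ∀ᶠ k in atTop, (1:ℝ) / (φ k + 1) < δ :=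
      hφ.tendsto_atTop.eventually (eps_small δ hδ)
    obtain ⟨k, hk1, hk2, hk3⟩ := (h1.and (h2.and h3)).exists
    calc y < J β (w k) := hk1
      _ ≤ J (b (φ k)) (w k) := hmono β (b (φ k)) hβ hk2 (w k)
      _ ≤ ((cinf + 1 / (φ k + 1) : ℝ) : EReal) := hBub (φ k) (w k) (hwB k)
      _ ≤ ((cinf + δ : ℝ) : EReal) := EReal.coe_le_coe_iff.mpr (by linarith [hk3])
  -- cinf ≤ sup over Bs of Jinf ∘ ηinf
  have himg : ηinf '' Bs ∈ F :=
    hη1inf Bs hBsF fun z hz => (hBsub z hz).trans hcc1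
  have hsupη : (cinf : EReal) ≤ ⨆ z ∈ Bs, Jinf (ηinf z) := by
    rw [← iSup_image]
    exact hcinf ▸ iInf₂_le _ himg
  -- a maximizing sequence in Bs
  have hzk : ∀ k : ℕ, ∃ z, z ∈ Bs ∧ ((cinf - 1 / (k + 1) : ℝ) : EReal) < Jinf (ηinf z) := by
    intro k
    have hlt : ((cinf - 1 / (k + 1) : ℝ) : EReal) < ⨆ z ∈ Bs, Jinf (ηinf z) :=
      lt_of_lt_of_le (EReal.coe_lt_coe_iff.mpr (by linarith [eps_pos k])) hsupη
    obtain ⟨z, hz⟩ := lt_iSup_iff.mp hlt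
    obtain ⟨hzmem, hzlt⟩ := lt_iSup_iff.mp hz
    exact ⟨z, hzmem, hzlt⟩
  choose z hzBs hzlt using hzk
  have hzub : ∀ k, Jinf (z k) ≤ (cinf : EReal) := fun k => hBsub _ (hzBs k)
  have hzη : ∀ k, Jinf (ηinf (z k)) ≤ Jinf (z k) :=
    fun k => hη2inf (z k) ((hzub k).trans hcc1)
  have t2 : Tendsto (fun k => Jinf (ηinf (z k))) atTop (𝓝 (cinf : EReal)) := by
    refine ereal_squeeze _ _ (fun δ hδ => Eventually.of_forall fun k => ?_)
      (fun δ hδ => ?_)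
    · exact ((hzη k).trans (hzub k)).trans (EReal.coe_le_coe_iff.mpr (by linarith))
    · filter_upwards [eps_small δ hδ] with k hk
      exact le_of_lt (lt_of_lt_of_le (EReal.coe_lt_coe_iff.mpr (by linarith)) (hzlt k).le)
  have t1 : Tendsto (fun k => Jinf (z k)) atTop (𝓝 (cinf : EReal)) := by
    refine ereal_squeeze _ _ (fun δ hδ => Eventually.of_forall fun k => ?_)
      (fun δ hδ => ?_)
    · exact (hzub k).trans (EReal.coe_le_coe_iff.mpr (by linarith))
    · filter_upwards [eps_small δ hδ] with k hk
      exact le_of_lt (lt_of_lt_of_le (EReal.coe_lt_coe_iff.mpr (by linarith))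
        ((hzlt k).le.trans (hzη k)))
  -- (PS)_∞
  obtain ⟨ψ, hψ, yb, hybK, hty⟩ := hPSinf z t1 t2
  have hybBs : yb ∈ Bs :=
    (hF1 Bs hBsF).mem_of_tendsto hty (Eventually.of_forall fun k => hzBs (ψ k))
  -- unfold membership of yb in Bs
  obtain ⟨σ, hσ, w, hwB, hwy⟩ := hybBs
  have hwB' : ∀ j, w j ∈ η (b (σ j)) '' A (σ j) := hwB
  choose x hxA hxw using fun j => hwB' j
  have hJy : Jinf yb = (cinf : EReal) := (hKinfdef ▸ hybK).1
  -- lower bound along w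
  have hlow : ∀ δ : ℝ, 0 < δ →
      ∀ᶠ j in atTop, ((cinf - δ : ℝ) : EReal) ≤ J (b (σ j)) (w j) := by
    intro δ hδ
    have h0 : ((cinf - δ : ℝ) : EReal) < Jinf yb := by
      rw [hJy]; exact EReal.coe_lt_coe_iff.mpr (by linarith)
    rw [hJinf] at h0
    obtain ⟨β, h1⟩ := lt_iSup_iff.mp h0
    obtain ⟨hβ, h2⟩ := lt_iSup_iff.mp h1
    have h3 : ∀ᶠ j in atTop, ((cinf - δ : ℝ) : EReal) < J β (w j) :=
      hwy.eventually ((hlsc β hβ yb) _ h2)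
    have h4 : ∀ᶠ j in atTop, β ≤ b (σ j) :=
      (hb.comp hσ.tendsto_atTop).eventually_ge_atTop β
    filter_upwards [h3, h4] with j hj1 hj2
    exact le_of_lt (hj1.trans_le (hmono β _ hβ hj2 (w j)))
  -- the two diagonal tendsto facts
  have hεσ : ∀ δ : ℝ, 0 < δ → ∀ᶠ j in atTop, (1:ℝ) / (σ j + 1) < δ :=
    fun δ hδ => hσ.tendsto_atTop.eventually (eps_small δ hδ)
  have tw : Tendsto (fun j => J (b (σ j)) (w j)) atTop (𝓝 (cinf : EReal)) := by
    refine ereal_squeeze _ _ (fun δ hδ => ?_) hlow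
    filter_upwards [hεσ δ hδ] with j hj
    exact (hBub (σ j) (w j) (hwB j)).trans (EReal.coe_le_coe_iff.mpr (by linarith))
  have tx : Tendsto (fun j => J (b (σ j)) (x j)) atTop (𝓝 (cinf : EReal)) := by
    refine ereal_squeeze _ _ (fun δ hδ => ?_) (fun δ hδ => ?_)
    · filter_upwards [hεσ δ hδ] with j hj
      exact (hub (σ j) (x j) (hxA j)).trans (EReal.coe_le_coe_iff.mpr (by linarith))
    · filter_upwards [hlow δ hδ] with j hj
      refine hj.trans ?_
      rw [← hxw j]
      exact hη2 (b (σ j)) (hbpos (σ j)) (x j) (hbd (σ j) (x j) (hxA j))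
  have tη : Tendsto (fun j => J (b (σ j)) (η (b (σ j)) (x j))) atTop (𝓝 (cinf : EReal)) := by
    have heq : (fun j => J (b (σ j)) (η (b (σ j)) (x j))) = fun j => J (b (σ j)) (w j) :=
      funext fun j => by rw [hxw j]
    rw [heq]; exact tw
  -- (UPS)
  obtain ⟨χ, hχ, xb, hxb1, hxb2⟩ := hUPS x (fun j => b (σ j)) (fun j => hbpos _)
    (hb.comp hσ.tendsto_atTop) tx tη
  have hxb2' : Tendsto (fun l => w (χ l)) atTop (𝓝 xb) := by
    have heq : (fun l => w (χ l)) = fun l => η (b (σ (χ l))) (x (χ l)) :=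
      funext fun l => (hxw (χ l)).symm
    rw [heq]; exact hxb2
  have hxby : xb = yb := tendsto_nhds_unique hxb2' (hwy.comp hχ.tendsto_atTop)
  rw [hxby] at hxb1
  refine ⟨yb, ⟨?_, hybK⟩, ?_⟩
  · rw [hCstar]
    exact ⟨x ∘ χ, fun l => b (σ (χ l)), fun l => hbpos _,
      (hb.comp hσ.tendsto_atTop).comp hχ.tendsto_atTop, hxb1,
      tx.comp hχ.tendsto_atTop, tη.comp hχ.tendsto_atTop⟩
  · exact ⟨σ ∘ χ, hσ.comp hχ, x ∘ χ, fun l => hxA (χ l), hxb1⟩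

/-- Assume (J), (F1) and (F2'), suppose the minimax levels are real, let the
maps `η_β` satisfy `(η1)_β` and `(η2)_β` with `(J_β, η_β)` satisfying
`(PS)_{c_β}`, and assume in addition (UPS). Then `C_* ∩ K_∞` is nonempty; more
precisely, for every sequence `β_n → +∞` and every sequence `(A_n) ⊆ F` with
`A_n` optimal for `J_{β_n}` at `c_{β_n}`, there exists
`x̄ ∈ C_* ∩ K_∞ ∩ limsup_n A_n`. -/
theorem Cstar_meets_Kinf {X : Type*} [MetricSpace X]
    (F : Set (Set X)) (J : ℝ → X → EReal)
    -- each J_β, β > 0, is lower semicontinuous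
    (hlsc : ∀ β : ℝ, 0 < β → LowerSemicontinuous (J β))
    -- assumption (J): monotonicity in β on (0, +∞)
    (hmono : ∀ β₁ β₂ : ℝ, 0 < β₁ → β₁ ≤ β₂ → ∀ x, J β₁ x ≤ J β₂ x)
    -- the limit functional J_∞
    (Jinf : X → EReal) (hJinf : ∀ x, Jinf x = ⨆ β : ℝ, ⨆ _ : 0 < β, J β x)
    -- the minimax levels c_β, 0 < β < +∞, and c_∞; all of them real
    (cβ : ℝ → EReal) (hcβ : ∀ β : ℝ, cβ β = ⨅ A ∈ F, ⨆ x ∈ A, J β x)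
    (cinf : ℝ) (hcinf : (⨅ A ∈ F, ⨆ x ∈ A, Jinf x) = (cinf : EReal))
    (hcreal : ∀ β : ℝ, 0 < β → ∃ r : ℝ, cβ β = (r : EReal))
    -- assumption (F1)
    (hF1 : ∀ A ∈ F, IsClosed A)
    -- assumption (F2')
    (hF2' : ∀ A : ℕ → Set X, (∀ n, A n ∈ F) →
      (∃ β : ℝ, 0 < β ∧ ∀ n, ∀ x ∈ A n, J β x ≤ (cinf : EReal) + 1) →
      SeqLimsup A ∈ F)
    -- the deformations η_β, 0 < β < +∞, mapping M_β^{c_∞+1} into itself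
    (η : ℝ → X → X)
    (hηmap : ∀ β : ℝ, 0 < β → ∀ x, J β x ≤ (cinf : EReal) + 1 →
      J β (η β x) ≤ (cinf : EReal) + 1)
    (hη1 : ∀ β : ℝ, 0 < β → ∀ A ∈ F, (∀ x ∈ A, J β x ≤ (cinf : EReal) + 1) →
      (η β) '' A ∈ F)
    (hη2 : ∀ β : ℝ, 0 < β → ∀ x, J β x ≤ (cinf : EReal) + 1 →
      J β (η β x) ≤ J β x)
    -- the deformation η_∞, mapping M_∞^{c_∞+1} into itself
    (ηinf : X → X)
    (hηinfmap : ∀ x, Jinf x ≤ (cinf : EReal) + 1 →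
      Jinf (ηinf x) ≤ (cinf : EReal) + 1)
    (hη1inf : ∀ A ∈ F, (∀ x ∈ A, Jinf x ≤ (cinf : EReal) + 1) → ηinf '' A ∈ F)
    (hη2inf : ∀ x, Jinf x ≤ (cinf : EReal) + 1 → Jinf (ηinf x) ≤ Jinf x)
    -- the critical sets K_β, 0 < β < +∞, and K_∞
    (K : ℝ → Set X)
    (hKdef : ∀ β : ℝ, K β = {x | J β x = cβ β ∧ J β (η β x) = cβ β})
    (Kinf : Set X)
    (hKinfdef : Kinf = {x | Jinf x = (cinf : EReal) ∧ Jinf (ηinf x) = (cinf : EReal)})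
    -- (PS)_{c_β} for 0 < β < +∞
    (hPS : ∀ β : ℝ, 0 < β → ∀ u : ℕ → X,
      Tendsto (fun n => J β (u n)) atTop (𝓝 (cβ β)) →
      Tendsto (fun n => J β (η β (u n))) atTop (𝓝 (cβ β)) →
      ∃ φ : ℕ → ℕ, StrictMono φ ∧ ∃ y ∈ K β, Tendsto (u ∘ φ) atTop (𝓝 y))
    -- (PS)_{c_∞}
    (hPSinf : ∀ u : ℕ → X,
      Tendsto (fun n => Jinf (u n)) atTop (𝓝 (cinf : EReal)) →
      Tendsto (fun n => Jinf (ηinf (u n))) atTop (𝓝 (cinf : EReal)) →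
      ∃ φ : ℕ → ℕ, StrictMono φ ∧ ∃ y ∈ Kinf, Tendsto (u ∘ φ) atTop (𝓝 y))
    -- assumption (UPS)
    (hUPS : ∀ u : ℕ → X, ∀ b : ℕ → ℝ, (∀ n, 0 < b n) → Tendsto b atTop atTop →
      Tendsto (fun n => J (b n) (u n)) atTop (𝓝 (cinf : EReal)) →
      Tendsto (fun n => J (b n) (η (b n) (u n))) atTop (𝓝 (cinf : EReal)) →
      ∃ φ : ℕ → ℕ, StrictMono φ ∧ ∃ y : X,
        Tendsto (u ∘ φ) atTop (𝓝 y) ∧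
        Tendsto (fun n => η (b (φ n)) (u (φ n))) atTop (𝓝 y))
    -- the set C_*
    (Cstar : Set X)
    (hCstar : Cstar = {x | ∃ u : ℕ → X, ∃ b : ℕ → ℝ,
      (∀ n, 0 < b n) ∧ Tendsto b atTop atTop ∧ Tendsto u atTop (𝓝 x) ∧
      Tendsto (fun n => J (b n) (u n)) atTop (𝓝 (cinf : EReal)) ∧
      Tendsto (fun n => J (b n) (η (b n) (u n))) atTop (𝓝 (cinf : EReal))}) :
    (Cstar ∩ Kinf).Nonempty ∧
    ∀ b : ℕ → ℝ, (∀ n, 0 < b n) → Tendsto b atTop atTop →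
      ∀ A : ℕ → Set X, (∀ n, A n ∈ F) →
        (∀ n, (⨆ x ∈ A n, J (b n) x) = cβ (b n)) →
        ∃ y, y ∈ Cstar ∩ Kinf ∩ SeqLimsup A := by
  have hJle : ∀ β : ℝ, 0 < β → ∀ x, J β x ≤ Jinf x := by
    intro β hβ x
    rw [hJinf x]
    exact le_iSup₂ (f := fun β' (_ : 0 < β') => J β' x) β hβ
  have hcle : ∀ β : ℝ, 0 < β → cβ β ≤ (cinf : EReal) := by
    intro β hβ
    rw [hcβ β, ← hcinf]
    exact iInf₂_mono fun A hA => iSup₂_mono fun x hx => hJle β hβ x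
  have main : ∀ b : ℕ → ℝ, (∀ n, 0 < b n) → Tendsto b atTop atTop →
      ∀ A : ℕ → Set X, (∀ n, A n ∈ F) →
      (∀ n, ∀ x ∈ A n, J (b n) x ≤ cβ (b n) + (((1:ℝ)/(n+1) : ℝ) : EReal)) →
      ∃ y, y ∈ Cstar ∩ Kinf ∩ SeqLimsup A :=
    fun b hb1 hb2 A hAF hAopt =>
      master F J hlsc hmono Jinf hJinf cβ cinf hcinf hF1 hF2' η hη1 hη2 ηinf hη1inf hη2inf
        Kinf hKinfdef hPSinf hUPS Cstar hCstar hcle b hb1 hb2 A hAF hAopt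
  constructor
  · -- nonemptiness
    set b : ℕ → ℝ := fun n => (n : ℝ) + 1 with hbdef
    have hb1 : ∀ n, 0 < b n := fun n => by positivity
    have hb2 : Tendsto b atTop atTop :=
      tendsto_atTop_add_const_right _ 1 tendsto_natCast_atTop_atTop
    have hex : ∀ n : ℕ, ∃ A, A ∈ F ∧
        ∀ x ∈ A, J (b n) x ≤ cβ (b n) + (((1:ℝ)/(n+1) : ℝ) : EReal) := by
      intro n
      obtain ⟨r, hr⟩ := hcreal (b n) (hb1 n)
      have hlt : (⨅ A ∈ F, ⨆ x ∈ A, J (b n) x) < cβ (b n) + (((1:ℝ)/(n+1) : ℝ) : EReal) := by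
        rw [← hcβ (b n), hr, ← EReal.coe_add]
        exact EReal.coe_lt_coe_iff.mpr (by linarith [eps_pos n])
      obtain ⟨A, hA⟩ := iInf_lt_iff.mp hlt
      obtain ⟨hAF, hAlt⟩ := iInf_lt_iff.mp hA
      exact ⟨A, hAF, fun x hx =>
        le_trans (le_iSup₂ (f := fun x (_ : x ∈ A) => J (b n) x) x hx) hAlt.le⟩
    choose A hAF hAopt using hex
    obtain ⟨y, hy⟩ := main b hb1 hb2 A hAF hAopt
    exact ⟨y, hy.1⟩
  · intro b hb1 hb2 A hAF hopt
    refine main b hb1 hb2 A hAF fun n x hx => ?_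
    have h1 : J (b n) x ≤ cβ (b n) := by
      rw [← hopt n]
      exact le_iSup₂ (f := fun x (_ : x ∈ A n) => J (b n) x) x hx
    obtain ⟨r, hr⟩ := hcreal (b n) (hb1 n)
    refine h1.trans ?_
    rw [hr, ← EReal.coe_add]
    exact EReal.coe_le_coe_iff.mpr (by linarith [eps_pos n])
end

section
/- Let K ⊆ X be a compact set, and let (A_n) be a sequence of closed subsets of K with σ(A_n) = A_n and γ(A_n) ≥ k for every n. Then limsup_n A_n is closed, σ-invariant, and γ(limsup_n A_n) ≥ k. -/
open Filter Topology

/-- The Krasnoselskii genus of a set `A` with respect to an involution `σ`. -/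
noncomputable def genus {X : Type*} [MetricSpace X] (σ : X → X) (A : Set X) : ℕ∞ :=
  sInf {n : ℕ∞ | ∃ m : ℕ, n = (m : ℕ∞) ∧ ∃ f : X → (Fin m → ℝ),
    ContinuousOn f A ∧ (∀ x ∈ A, f x ≠ 0) ∧ ∀ x ∈ A, f (σ x) = - f x}

/-! The set `SeqLimsup A` is closed (it is `⋂ N, closure (⋃ n ≥ N, A n)`) and inherits the
symmetry of the `A n`. If its genus were some `m < k`, an odd nonvanishing map
`SeqLimsup A → ℝ^m` would extend by Tietze, and after antisymmetrization, to an odd continuous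
map `G` on all of `X`.
The open set `{G ≠ 0}` contains `SeqLimsup A`, so by compactness of `K` it contains some `A n`,
whence `γ(A n) ≤ m < k`. -/

section SeqLimsup

variable {X : Type*} [MetricSpace X] {A : ℕ → Set X}

lemma seqLimsup_eq_iInter_closure (A : ℕ → Set X) :
    SeqLimsup A = ⋂ N, closure (⋃ n ≥ N, A n) := by
  ext x
  simp only [Set.mem_iInter]
  constructor
  · rintro ⟨φ, hφ, y, hy, hyx⟩ N
    refine mem_closure_of_tendsto hyx ?_
    filter_upwards [eventually_ge_atTop N] with n hn
    exact Set.mem_biUnion (hn.trans hφ.le_apply) (hy n)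
  · intro hx
    have hfreq : ∀ j : ℕ, ∃ᶠ n in atTop, ∃ y ∈ A n, dist y x < 1 / (j + 1) := by
      refine fun j => frequently_atTop.2 fun N => ?_
      obtain ⟨y, hy, hyx⟩ := Metric.mem_closure_iff.1 (hx N) _ Nat.one_div_pos_of_nat
      simp only [Set.mem_iUnion] at hy
      obtain ⟨n, hn, hyn⟩ := hy
      exact ⟨n, hn, y, hyn, by rwa [dist_comm]⟩
    obtain ⟨φ, hφ, hφA⟩ := extraction_forall_of_frequently hfreq
    choose y hyA hyx using hφA
    refine ⟨φ, hφ, y, hyA, tendsto_iff_dist_tendsto_zero.2 ?_⟩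
    exact squeeze_zero (fun _ => dist_nonneg) (fun j => (hyx j).le)
      tendsto_one_div_add_atTop_nhds_zero_nat

lemma isClosed_seqLimsup (A : ℕ → Set X) : IsClosed (SeqLimsup A) := by
  rw [seqLimsup_eq_iInter_closure]
  exact isClosed_iInter fun _ => isClosed_closure

lemma mapsTo_seqLimsup {σ : X → X} (hσ : Continuous σ) (hA : ∀ n, Set.MapsTo σ (A n) (A n)) :
    Set.MapsTo σ (SeqLimsup A) (SeqLimsup A) :=
  fun _ ⟨φ, hφ, y, hy, hyx⟩ => ⟨φ, hφ, σ ∘ y, fun n => hA _ (hy n), (hσ.tendsto _).comp hyx⟩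

lemma eventually_subset_of_seqLimsup_subset {K : Set X} (hK : IsCompact K) (hA : ∀ n, A n ⊆ K)
    {U : Set X} (hU : IsOpen U) (hAU : SeqLimsup A ⊆ U) : ∀ᶠ n in atTop, A n ⊆ U := by
  by_contra h
  obtain ⟨φ, hφ, hφU⟩ := extraction_of_frequently_atTop (not_eventually.1 h)
  choose x hxA hxU using fun n => Set.not_subset.1 (hφU n)
  obtain ⟨a, -, ψ, hψ, hxa⟩ := hK.tendsto_subseq fun n => hA _ (hxA n)
  have ha : a ∈ SeqLimsup A := ⟨φ ∘ ψ, hφ.comp hψ, x ∘ ψ, fun n => hxA (ψ n), hxa⟩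
  exact hU.isClosed_compl.mem_of_tendsto hxa (Eventually.of_forall fun n => hxU (ψ n)) (hAU ha)

end SeqLimsup

universe u v

lemma exists_continuous_odd_extension {X : Type u} {E : Type v} [TopologicalSpace X]
    [NormalSpace X] [NormedAddCommGroup E] [NormedSpace ℝ E] [TietzeExtension.{u, v} E]
    {σ : X → X} (hσ : Continuous σ) (hσσ : ∀ x, σ (σ x) = x)
    {L : Set X} (hL : IsClosed L) (hσL : Set.MapsTo σ L L)
    {f : X → E} (hf : ContinuousOn f L) (hfodd : ∀ x ∈ L, f (σ x) = -f x) :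
    ∃ G : X → E, Continuous G ∧ (∀ x, G (σ x) = -G x) ∧ Set.EqOn G f L := by
  obtain ⟨F, hF⟩ := ContinuousMap.exists_restrict_eq hL ⟨L.domRestrict f, hf.domRestrict⟩
  have hFf : ∀ x ∈ L, F x = f x := fun x hx => congrArg (· ⟨x, hx⟩) hF
  refine ⟨fun x => (2 : ℝ)⁻¹ • (F x - F (σ x)), ?_, fun x => ?_, fun x hx => ?_⟩
  · fun_prop
  · simp only [hσσ]
    module
  · simp only [hFf x hx, hFf _ (hσL hx), hfodd x hx]
    module

lemma genus_le_of_odd {X : Type*} [MetricSpace X] {σ : X → X} {A : Set X} {m : ℕ}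
    {f : X → Fin m → ℝ} (hf : ContinuousOn f A) (hf0 : ∀ x ∈ A, f x ≠ 0)
    (hfodd : ∀ x ∈ A, f (σ x) = -f x) : genus σ A ≤ m :=
  sInf_le ⟨m, rfl, f, hf, hf0, hfodd⟩

theorem genus_seqLimsup_general {X : Type*} [MetricSpace X]
    (σ : X → X) (hσiso : Isometry σ) (hσinv : ∀ x, σ (σ x) = x)
    (K : Set X) (hK : IsCompact K)
    (A : ℕ → Set X) (hAsub : ∀ n, A n ⊆ K)
    (hAinv : ∀ n, σ '' A n = A n)
    (k : ℕ) (hgen : ∀ n, (k : ℕ∞) ≤ genus σ (A n)) :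
    IsClosed (SeqLimsup A) ∧ σ '' SeqLimsup A = SeqLimsup A ∧
    (k : ℕ∞) ≤ genus σ (SeqLimsup A) := by
  have hσ := hσiso.continuous
  have hclosed := isClosed_seqLimsup A
  have hmaps : Set.MapsTo σ (SeqLimsup A) (SeqLimsup A) :=
    mapsTo_seqLimsup hσ fun n => Set.mapsTo_iff_image_subset.2 (hAinv n).subset
  refine ⟨hclosed, hmaps.image_subset.antisymm fun x hx => ⟨σ x, hmaps hx, hσinv x⟩, ?_⟩
  by_contra! hlt
  obtain ⟨_, ⟨m, rfl, f, hf, hf0, hfodd⟩, hmk⟩ := sInf_lt_iff.1 hlt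
  obtain ⟨G, hG, hGodd, hGf⟩ := exists_continuous_odd_extension hσ hσinv hclosed hmaps hf hfodd
  have hLG : SeqLimsup A ⊆ {x | G x ≠ 0} := fun x hx => (hGf hx).trans_ne (hf0 x hx)
  obtain ⟨N, hN⟩ := (eventually_subset_of_seqLimsup_subset hK hAsub
    (isOpen_ne_fun hG continuous_const) hLG).exists
  exact hmk.not_ge <| (hgen N).trans <|
    genus_le_of_odd hG.continuousOn (fun x hx => hN hx) fun x _ => hGodd x

/-- Let `σ` be an isometric involution, `K ⊆ X` compact, and `(A_n)` a sequence
of closed subsets of `K` with `σ(A_n) = A_n` and `γ(A_n) ≥ k` for every `n`.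
Then `limsup_n A_n` is closed, `σ`-invariant, and `γ(limsup_n A_n) ≥ k`. -/
theorem genus_seqLimsup {X : Type*} [MetricSpace X]
    (σ : X → X) (hσiso : Isometry σ) (hσinv : ∀ x, σ (σ x) = x)
    (K : Set X) (hK : IsCompact K)
    (A : ℕ → Set X) (hAclosed : ∀ n, IsClosed (A n)) (hAsub : ∀ n, A n ⊆ K)
    (hAinv : ∀ n, σ '' A n = A n)
    (k : ℕ) (hgen : ∀ n, (k : ℕ∞) ≤ genus σ (A n)) :
    IsClosed (SeqLimsup A) ∧ σ '' SeqLimsup A = SeqLimsup A ∧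
    (k : ℕ∞) ≤ genus σ (SeqLimsup A) :=
  genus_seqLimsup_general σ hσiso hσinv K hK A hAsub hAinv k hgen
end
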